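/- arXiv:2105.09905 — 2 statements merged into one kernel-verified Lean document; each statement's English description precedes it below -/
import Mathlib

section
/- Let X be a topological space, 𝓑 a base for its topology, and (Kₙ)_{n∈ℕ} a sequence of subsets of X having no subsequence that converges in the sense of Kuratowski. For each U ∈ 𝓑 let A_U = {n ∈ ℕ : Kₙ ∩ U = ∅}. Then the family {A_U : U ∈ 𝓑} is a splitting family of subsets of ℕ. -/
open Set Topology TopologicalSpace

/-- Lower closed limit (Kuratowski) of the subsequence of `K` indexed by the
infinite set `A ⊆ ℕ`, with respect to the topology `t`: points all of whose
open neighborhoods meet `K n` for all but finitely many `n ∈ A`. -/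
def kurLi {X : Type*} (t : TopologicalSpace X) (K : ℕ → Set X) (A : Set ℕ) : Set X :=
  {x | ∀ U : Set X, IsOpen[t] U → x ∈ U → {n ∈ A | U ∩ K n = ∅}.Finite}

/-- Upper closed limit (Kuratowski): points all of whose open neighborhoods
meet `K n` for infinitely many `n ∈ A`. -/
def kurLs {X : Type*} (t : TopologicalSpace X) (K : ℕ → Set X) (A : Set ℕ) : Set X :=
  {x | ∀ U : Set X, IsOpen[t] U → x ∈ U → {n ∈ A | (U ∩ K n).Nonempty}.Infinite}

/-- A family of subsets of `ℕ` is splitting if every infinite `A ⊆ ℕ` is split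
by some member of the family. -/
def IsSplittingFamily (S : Set (Set ℕ)) : Prop :=
  ∀ A : Set ℕ, A.Infinite → ∃ s ∈ S, (A ∩ s).Infinite ∧ (A \ s).Infinite

/-!
Over an infinite index set the lower closed limit is contained in the upper one, so a subsequence
that does not converge has a point `x` in `Ls \ Li`. As `x ∉ Li`, some neighbourhood of `x`, hence
any basic `V ∋ x` inside it, misses `Kₙ` for infinitely many `n ∈ A`; as `x ∈ Ls`, that same `V`
meets `Kₙ` for infinitely many `n ∈ A`. So `A_V` splits `A`.
-/

section KuratowskiLimits

variable {X : Type*} [t : TopologicalSpace X] {K : ℕ → Set X} {A : Set ℕ}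

theorem kurLi_subset_kurLs (hA : A.Infinite) : kurLi t K A ⊆ kurLs t K A := by
  intro x hx U hU hxU hfin
  have hcover : A ⊆ {n ∈ A | U ∩ K n = ∅} ∪ {n ∈ A | (U ∩ K n).Nonempty} := fun n hn =>
    (U ∩ K n).eq_empty_or_nonempty.imp (⟨hn, ·⟩) (⟨hn, ·⟩)
  exact hA (((hx U hU hxU).union hfin).subset hcover)

theorem TopologicalSpace.IsTopologicalBasis.exists_splits_of_mem_kurLs_of_notMem_kurLi
    {B : Set (Set X)} (hB : IsTopologicalBasis B) {x : X} (hLs : x ∈ kurLs t K A) (hLi : x ∉ kurLi t K A) :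
    ∃ V ∈ B, (A ∩ {n | K n ∩ V = ∅}).Infinite ∧ (A \ {n | K n ∩ V = ∅}).Infinite := by
  obtain ⟨U, hU, hxU, hmiss⟩ :
      ∃ U, IsOpen U ∧ x ∈ U ∧ {n ∈ A | U ∩ K n = ∅}.Infinite := by
    simpa [kurLi] using hLi
  obtain ⟨V, hVB, hxV, hVU⟩ := hB.exists_subset_of_mem_open hxU hU
  refine ⟨V, hVB, hmiss.mono ?_, (hLs V (hB.isOpen hVB) hxV).mono ?_⟩
  · rintro n ⟨hnA, hUn⟩
    refine ⟨hnA, subset_empty_iff.mp ?_⟩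
    rw [← hUn, inter_comm]
    exact inter_subset_inter_left _ hVU
  · rintro n ⟨hnA, y, hyV, hyK⟩
    exact ⟨hnA, fun hVn => hVn.subset ⟨hyK, hyV⟩⟩

end KuratowskiLimits

/-- If `(Kₙ)` has no Kuratowski-convergent subsequence and `B` is a base, then
the family of the sets `A_U = {n | Kₙ ∩ U = ∅}`, `U ∈ B`, is splitting. -/
theorem stmt3 {X : Type*} [t : TopologicalSpace X] (B : Set (Set X))
    (hB : IsTopologicalBasis B) (K : ℕ → Set X)
    (hK : ∀ A : Set ℕ, A.Infinite → kurLi t K A ≠ kurLs t K A) :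
    IsSplittingFamily ((fun U => {n : ℕ | K n ∩ U = ∅}) '' B) := by
  intro A hA
  obtain ⟨x, hxLs, hxLi⟩ := exists_of_ssubset ((kurLi_subset_kurLs hA).ssubset_of_ne (hK A hA))
  obtain ⟨V, hVB, hsplit⟩ := hB.exists_splits_of_mem_kurLs_of_notMem_kurLi hxLs hxLi
  exact ⟨_, mem_image_of_mem _ hVB, hsplit⟩
end

section
/- The Sorgenfrey plane does not have the generalized Bolzano–Weierstrass property: if ℝ carries the lower-limit topology (generated by the half-open intervals [a,b), a < b) and ℝ × ℝ carries the corresponding product topology, then there exists a sequence (Kₙ)_{n∈ℕ} of subsets of ℝ × ℝ with no subsequence converging in the sense of Kuratowski. -/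
open Set Topology TopologicalSpace

/-- The Sorgenfrey (lower-limit) topology on `ℝ`, generated by the half-open
intervals `[a, b)` with `a < b`. -/
def sorgenfreyTop : TopologicalSpace ℝ :=
  TopologicalSpace.generateFrom {s : Set ℝ | ∃ a b : ℝ, a < b ∧ s = Set.Ico a b}

/-- The product topology of two copies of the Sorgenfrey line (the Sorgenfrey
plane). -/
def sorgenfreyPlaneTop : TopologicalSpace (ℝ × ℝ) :=
  TopologicalSpace.induced Prod.fst sorgenfreyTop ⊓
    TopologicalSpace.induced Prod.snd sorgenfreyTop

/-!
The antidiagonal `{(x, -x)}` of the Sorgenfrey plane is a closed discrete set of size continuum: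
`[x, x + 1) × [-x, -x + 1)` meets it only in `(x, -x)`. Label its points injectively by subsets
of `ℕ` and let `Kₙ` consist of the points whose label contains `n`. Given an infinite `A`, split
it by a set `s`; the point labelled `s` lies in `Kₙ` for the infinitely many `n ∈ A ∩ s`, so it is
in the upper limit, while its isolating neighbourhood misses `Kₙ` for the infinitely many
`n ∈ A \ s`, so it is not in the lower limit.
-/

section Kuratowski

variable {X : Type*} {t : TopologicalSpace X} {K : ℕ → Set X} {A s : Set ℕ} {x : X}

lemma mem_kurLs_of_forall_mem (hx : ∀ n ∈ s, x ∈ K n) (hAs : (A ∩ s).Infinite) :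
    x ∈ kurLs t K A := by
  intro U _ hxU
  exact hAs.mono fun n hn ↦ ⟨hn.1, x, hxU, hx n hn.2⟩

lemma notMem_kurLi_of_inter_eq_empty {U : Set X} (hU : IsOpen[t] U) (hxU : x ∈ U)
    (hUK : ∀ n ∈ A \ s, U ∩ K n = ∅) (hAs : (A \ s).Infinite) : x ∉ kurLi t K A :=
  fun hx ↦ hAs.mono (fun n hn ↦ (⟨hn.1, hUK n hn⟩ : n ∈ {n ∈ A | U ∩ K n = ∅})) (hx U hU hxU)

theorem kurLi_ne_kurLs_of_isSplittingFamily {S : Set (Set ℕ)} (hS : IsSplittingFamily S)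
    (p : Set ℕ → X)
    (hp : ∀ s ∈ S, ∃ U, IsOpen[t] U ∧ p s ∈ U ∧ ∀ s' ∈ S, p s' ∈ U → s' = s)
    (hA : A.Infinite) :
    kurLi t (fun n ↦ p '' {s ∈ S | n ∈ s}) A ≠ kurLs t (fun n ↦ p '' {s ∈ S | n ∈ s}) A := by
  obtain ⟨s, hsS, hAs, hAs'⟩ := hS A hA
  obtain ⟨U, hU, hsU, hUS⟩ := hp s hsS
  have hLs : p s ∈ kurLs t (fun n ↦ p '' {s ∈ S | n ∈ s}) A :=
    mem_kurLs_of_forall_mem (fun n hn ↦ ⟨s, ⟨hsS, hn⟩, rfl⟩) hAs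
  refine fun h ↦ notMem_kurLi_of_inter_eq_empty hU hsU ?_ hAs' (h ▸ hLs)
  rintro n ⟨-, hns⟩
  refine eq_empty_iff_forall_notMem.mpr ?_
  rintro _ ⟨hU', s', ⟨hs'S, hns'⟩, rfl⟩
  exact hns (hUS s' hs'S hU' ▸ hns')

end Kuratowski

lemma isSplittingFamily_univ : IsSplittingFamily univ := by
  intro A hA
  have hinj : Function.Injective (Nat.nth (· ∈ A)) := Nat.nth_injective hA
  let s := range fun k ↦ Nat.nth (· ∈ A) (2 * k)
  have hsA : s ⊆ A := by
    rintro _ ⟨k, rfl⟩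
    exact Nat.nth_mem_of_infinite hA _
  have hodd : (range fun k ↦ Nat.nth (· ∈ A) (2 * k + 1)) ⊆ A \ s := by
    rintro _ ⟨k, rfl⟩
    refine ⟨Nat.nth_mem_of_infinite hA _, ?_⟩
    rintro ⟨j, hj⟩
    have := hinj hj
    omega
  refine ⟨s, mem_univ _, ?_, ?_⟩
  · rw [inter_eq_right.mpr hsA]
    exact infinite_range_of_injective fun a b h ↦ by have := hinj h; omega
  · exact (infinite_range_of_injective fun a b h ↦ by have := hinj h; omega).mono hodd

lemma isOpen_Ico_sorgenfreyTop (a b : ℝ) : IsOpen[sorgenfreyTop] (Ico a b) := by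
  rcases lt_or_ge a b with hab | hba
  · exact isOpen_generateFrom_of_mem ⟨a, b, hab, rfl⟩
  · rw [Ico_eq_empty_of_le hba]
    exact @isOpen_empty _ sorgenfreyTop

lemma isOpen_prod_sorgenfreyPlaneTop {u v : Set ℝ} (hu : IsOpen[sorgenfreyTop] u)
    (hv : IsOpen[sorgenfreyTop] v) : IsOpen[sorgenfreyPlaneTop] (u ×ˢ v) :=
  @IsOpen.inter _ sorgenfreyPlaneTop _ _
    (IsOpen.mono (@isOpen_induced _ _ sorgenfreyTop _ _ hu) inf_le_left)
    (IsOpen.mono (@isOpen_induced _ _ sorgenfreyTop _ _ hv) inf_le_right)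

lemma eq_of_mem_Ico_of_neg_mem_Ico {x y : ℝ} (hy : y ∈ Ico x (x + 1))
    (hy' : -y ∈ Ico (-x) (-x + 1)) : y = x :=
  le_antisymm (neg_le_neg_iff.mp hy'.1) hy.1

/-- The Sorgenfrey plane does not have the generalized Bolzano–Weierstrass
property. -/
theorem stmt18 :
    ∃ K : ℕ → Set (ℝ × ℝ), ∀ A : Set ℕ, A.Infinite →
      kurLi sorgenfreyPlaneTop K A ≠ kurLs sorgenfreyPlaneTop K A := by
  obtain ⟨f⟩ : Nonempty (Set ℕ ↪ ℝ) := by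
    rw [← Cardinal.le_def, Cardinal.mk_real, Cardinal.mk_set, Cardinal.mk_nat,
      Cardinal.two_power_aleph0]
  let p : Set ℕ → ℝ × ℝ := fun s ↦ (f s, -f s)
  refine ⟨fun n ↦ p '' {s ∈ univ | n ∈ s},
    fun A ↦ kurLi_ne_kurLs_of_isSplittingFamily isSplittingFamily_univ p ?_⟩
  intro s _
  refine ⟨Ico (f s) (f s + 1) ×ˢ Ico (-f s) (-f s + 1),
    isOpen_prod_sorgenfreyPlaneTop (isOpen_Ico_sorgenfreyTop _ _) (isOpen_Ico_sorgenfreyTop _ _),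
    ⟨⟨le_rfl, by linarith⟩, ⟨le_rfl, by linarith⟩⟩, fun s' _ hs' ↦ ?_⟩
  exact f.injective (eq_of_mem_Ico_of_neg_mem_Ico hs'.1 hs'.2)
end
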